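/- Let K be a directed partial order and ⟨A_k : k ∈ K⟩, ⟨E_k : k ∈ K⟩ systems of complete Boolean algebras such that A_k <∘ A_ℓ, E_k <∘ E_ℓ and A_k <∘ E_k for all k ≤ ℓ, and all squares (A_k; E_k, A_ℓ; E_ℓ) are correct. Then every maximal antichain of ⋃_k A_k remains predense in ⋃_k E_k; i.e., the direct limit of the A_k completely embeds into the direct limit of the E_k. -/

import Mathlib

/-!
Given `b ≠ 0` in `E_k`, its projection `h(b)` onto `A_k` is a nonzero element of `⋃ A`, so by
maximality it meets some `m ∈ M`. Pick `A_l ∋ m` and an upper bound `n` of `k, l`. Since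
`m ≤ h(m)`, also `h(m) · h(b) ≠ 0`, and correctness of the square `(A_k; E_k, A_n; E_n)` gives
`m · b ≠ 0`.
-/

/-- The projection onto a complete subalgebra `S`: `h(a) = ∏ {b ∈ S : b ≥ a}`. -/
noncomputable def projSub {B : Type*} [CompleteBooleanAlgebra B] (S : Set B) (a : B) : B :=
  sInf {b | b ∈ S ∧ a ≤ b}

section projSub

variable {B : Type*} [CompleteBooleanAlgebra B]

theorem le_projSub (S : Set B) (a : B) : a ≤ projSub S a :=
  le_sInf fun _ hx => hx.2

theorem projSub_mem {S : Set B} (hS : ∀ T : Set B, T ⊆ S → sInf T ∈ S) (a : B) :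
    projSub S a ∈ S :=
  hS _ fun _ hx => hx.1

theorem projSub_ne_bot (S : Set B) {a : B} (ha : a ≠ ⊥) : projSub S a ≠ ⊥ :=
  ne_bot_of_le_ne_bot ha (le_projSub S a)

end projSub

theorem stmt11_general {B K : Type*} [CompleteBooleanAlgebra B] [Preorder K]
    (hdir : ∀ k l : K, ∃ m, k ≤ m ∧ l ≤ m)
    (A E : K → Set B)
    (hAinf : ∀ k, ∀ T : Set B, T ⊆ A k → sInf T ∈ A k)
    (hAmono : ∀ k l : K, k ≤ l → A k ⊆ A l)
    (hcorrect : ∀ k l : K, k ≤ l → ∀ a ∈ A l, ∀ b ∈ E k,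
      projSub (A k) a ⊓ projSub (A k) b ≠ ⊥ → a ⊓ b ≠ ⊥)
    (M : Set B) (hMsub : M ⊆ ⋃ k, A k)
    (hmax : ∀ c ∈ ⋃ k, A k, c ≠ ⊥ → ∃ m ∈ M, m ⊓ c ≠ ⊥) :
    ∀ b ∈ ⋃ k, E k, b ≠ ⊥ → ∃ m ∈ M, m ⊓ b ≠ ⊥ := by
  intro b hb hb0
  obtain ⟨k, hbk⟩ := Set.mem_iUnion.mp hb
  obtain ⟨m, hm, hmb⟩ := hmax (projSub (A k) b)
    (Set.mem_iUnion.mpr ⟨k, projSub_mem (hAinf k) b⟩) (projSub_ne_bot _ hb0)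
  obtain ⟨l, hml⟩ := Set.mem_iUnion.mp (hMsub hm)
  obtain ⟨n, hkn, hln⟩ := hdir k l
  have hproj : projSub (A k) m ⊓ projSub (A k) b ≠ ⊥ :=
    ne_bot_of_le_ne_bot hmb (inf_le_inf_right _ (le_projSub _ m))
  exact ⟨m, hm, hcorrect k n hkn m (hAmono l n hln hml) b hbk hproj⟩

/-- Embeddability of direct limits: given directed systems `⟨A_k⟩`, `⟨E_k⟩` of complete
Boolean algebras (modelled as complete subalgebras of an ambient complete Boolean algebra)
with `A_k ⊆ A_ℓ`, `E_k ⊆ E_ℓ`, `A_k ⊆ E_k`, and all squares `(A_k; E_k, A_ℓ; E_ℓ)`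
correct, every maximal antichain of `⋃_k A_k` remains predense in `⋃_k E_k`. -/
theorem stmt11 {B K : Type*} [CompleteBooleanAlgebra B] [Preorder K]
    (hdir : ∀ k l : K, ∃ m, k ≤ m ∧ l ≤ m)
    (A E : K → Set B)
    (hAinf : ∀ k, ∀ T : Set B, T ⊆ A k → sInf T ∈ A k)
    (hAcompl : ∀ k, ∀ x ∈ A k, xᶜ ∈ A k)
    (hEinf : ∀ k, ∀ T : Set B, T ⊆ E k → sInf T ∈ E k)
    (hEcompl : ∀ k, ∀ x ∈ E k, xᶜ ∈ E k)
    (hAmono : ∀ k l : K, k ≤ l → A k ⊆ A l)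
    (hEmono : ∀ k l : K, k ≤ l → E k ⊆ E l)
    (hAE : ∀ k, A k ⊆ E k)
    (hcorrect : ∀ k l : K, k ≤ l → ∀ a ∈ A l, ∀ b ∈ E k,
      projSub (A k) a ⊓ projSub (A k) b ≠ ⊥ → a ⊓ b ≠ ⊥)
    (M : Set B) (hMsub : M ⊆ ⋃ k, A k) (hM0 : ∀ m ∈ M, m ≠ ⊥)
    (hanti : M.Pairwise fun x y => x ⊓ y = ⊥)
    (hmax : ∀ c ∈ ⋃ k, A k, c ≠ ⊥ → ∃ m ∈ M, m ⊓ c ≠ ⊥) :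
    ∀ b ∈ ⋃ k, E k, b ≠ ⊥ → ∃ m ∈ M, m ⊓ b ≠ ⊥ :=
  stmt11_general hdir A E hAinf hAmono hcorrect M hMsub hmax
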